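/- Let f ∈ Γ₀(ℝⁿ). Then f is essentially strictly convex if and only if the Moreau envelope e_r f is strictly convex (for r > 0). -/

import Mathlib

/-!
Write `e` for the Moreau envelope. A point `p` minimises `f + r/2 ‖· - x‖²` exactly when
`r (x - p) ∈ ∂f p`, and such minimisers (proximal points) exist for every `x`, because `f` has a
continuous affine minorant (Hahn–Banach applied to its closed convex epigraph) and the quadratic
term makes the objective coercive.

If `f` is essentially strictly convex and `p, q` are the proximal points of `x ≠ y`, then
`e(θx + (1-θ)y) ≤ f(θp + (1-θ)q) + r/2 ‖θ(p - x) + (1-θ)(q - y)‖²`. Strict convexity of the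
squared norm makes this strictly smaller than `θ e(x) + (1-θ) e(y)` unless `p - x = q - y`; in that
case `p ≠ q` share the subgradient `r (x - p)`, hence so does every point of `[p, q]`, and strict
convexity of `f` on that segment gives the strict inequality instead.

Conversely, let `m = θx + (1-θ)y` with `v ∈ ∂f m`. Then `e(m + v/r) = f m + ‖v‖²/(2r)`, while
`e(z + v/r) ≤ f z + ‖v‖²/(2r)` for every `z`, so strict convexity of `e` on the segment
`[x + v/r, y + v/r]` gives `f m < θ f x + (1-θ) f y`.
-/

/-- Convexity for extended-real-valued functions. -/
def EConvexOn {n : ℕ} (f : EuclideanSpace ℝ (Fin n) → EReal) : Prop :=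
  ∀ x y : EuclideanSpace ℝ (Fin n), ∀ θ : ℝ, 0 ≤ θ → θ ≤ 1 →
    f (θ • x + (1 - θ) • y) ≤ ((θ : ℝ) : EReal) * f x + (((1 - θ : ℝ)) : EReal) * f y

/-- Strict convexity on a set for extended-real-valued functions. -/
def EStrictConvexOn {n : ℕ} (s : Set (EuclideanSpace ℝ (Fin n)))
    (f : EuclideanSpace ℝ (Fin n) → EReal) : Prop :=
  ∀ x ∈ s, ∀ y ∈ s, x ≠ y → ∀ θ : ℝ, 0 < θ → θ < 1 →
    f (θ • x + (1 - θ) • y) < ((θ : ℝ) : EReal) * f x + (((1 - θ : ℝ)) : EReal) * f y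

/-- The convex subdifferential of an extended-real-valued function. -/
def ESubdiff {n : ℕ} (f : EuclideanSpace ℝ (Fin n) → EReal)
    (x v : EuclideanSpace ℝ (Fin n)) : Prop :=
  ∀ y, f x + (((inner ℝ v (y - x) : ℝ)) : EReal) ≤ f y

open Set Filter Topology RealInnerProductSpace

theorem nonneg_of_forall_mul_add_sq_mul_nonneg {A B : ℝ}
    (h : ∀ t ∈ Ioc (0 : ℝ) 1, 0 ≤ t * A + t ^ 2 * B) : 0 ≤ A := by
  have hlim : Tendsto (fun t : ℝ => A + t * B) (𝓝[>] 0) (𝓝 A) := by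
    have hcont : Continuous (fun t : ℝ => A + t * B) := by fun_prop
    simpa using (hcont.tendsto 0).mono_left nhdsWithin_le_nhds
  refine ge_of_tendsto hlim ?_
  filter_upwards [Ioo_mem_nhdsGT one_pos] with t ht
  refine nonneg_of_mul_nonneg_right ?_ ht.1
  linarith [h t ⟨ht.1, ht.2.le⟩]

theorem norm_smul_add_one_sub_smul_sq_lt {E : Type*} [NormedAddCommGroup E]
    [InnerProductSpace ℝ E] {u w : E} (huw : u ≠ w) {θ : ℝ} (h₀ : 0 < θ) (h₁ : θ < 1) :
    ‖θ • u + (1 - θ) • w‖ ^ 2 < θ * ‖u‖ ^ 2 + (1 - θ) * ‖w‖ ^ 2 := by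
  have hexp : ‖θ • u + (1 - θ) • w‖ ^ 2
      = θ ^ 2 * ‖u‖ ^ 2 + 2 * (θ * (1 - θ) * ⟪u, w⟫) + (1 - θ) ^ 2 * ‖w‖ ^ 2 := by
    rw [norm_add_sq_real, norm_smul, norm_smul, real_inner_smul_left, real_inner_smul_right,
      Real.norm_of_nonneg h₀.le, Real.norm_of_nonneg (sub_nonneg.2 h₁.le)]
    ring
  have hpos : 0 < ‖u - w‖ ^ 2 := by positivity [sub_ne_zero.2 huw]
  nlinarith [mul_pos (mul_pos h₀ (sub_pos.2 h₁)) hpos, norm_sub_sq_real u w]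

theorem exists_affine_le_of_convex_epigraph {E : Type*} [NormedAddCommGroup E] [NormedSpace ℝ E]
    {f : E → EReal} (hlsc : LowerSemicontinuous f)
    (hepi : Convex ℝ {p : E × ℝ | f p.1 ≤ p.2}) {x₀ : E} {a₀ : ℝ} (hx₀ : f x₀ = a₀) :
    ∃ (ψ : E →L[ℝ] ℝ) (c : ℝ), ∀ y, ((ψ y + c : ℝ) : EReal) ≤ f y := by
  have hclosed : IsClosed {p : E × ℝ | f p.1 ≤ p.2} :=
    hlsc.isClosed_epigraph.preimage
      (continuous_fst.prodMk (continuous_coe_real_ereal.comp continuous_snd))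
  obtain ⟨φ, u, hφ, hφx₀⟩ := geometric_hahn_banach_closed_point hepi hclosed
    (show (x₀, a₀ - 1) ∉ {p : E × ℝ | f p.1 ≤ p.2} by simp [hx₀, -EReal.coe_sub])
  set ψ := φ.comp (.inl ℝ E ℝ)
  set s := φ (0, 1)
  have hsplit : ∀ x t, φ (x, t) = ψ x + t * s := by
    intro x t
    rw [show (x, t) = (x, 0) + t • (0, 1) by simp, map_add, map_smul, smul_eq_mul, mul_comm]
    rfl
  have hs : s < 0 := by
    have h₁ := hφ (x₀, a₀) (by simp [hx₀])
    rw [hsplit] at h₁ hφx₀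
    linarith
  refine ⟨-s⁻¹ • ψ, u / s, fun y => EReal.le_of_forall_lt_iff_le.1 fun b hb => ?_⟩
  have hyb := hφ (y, b) hb.le
  rw [hsplit] at hyb
  rw [EReal.coe_le_coe_iff, show (-s⁻¹ • ψ) y + u / s = (u - ψ y) / s by
    simp only [FunLike.coe_smul, Pi.smul_apply, smul_eq_mul]; field_simp; ring,
    div_le_iff_of_neg hs]
  linarith

section MoreauEnvelope

variable {E : Type*} [NormedAddCommGroup E] {f : E → EReal} {r : ℝ} {x p : E}

noncomputable def moreauEnvelope (f : E → EReal) (r : ℝ) (x : E) : EReal :=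
  ⨅ y, f y + ((r / 2 * ‖y - x‖ ^ 2 : ℝ) : EReal)

def IsProxPoint (f : E → EReal) (r : ℝ) (x p : E) : Prop :=
  ∀ y, f p + ((r / 2 * ‖p - x‖ ^ 2 : ℝ) : EReal) ≤ f y + ((r / 2 * ‖y - x‖ ^ 2 : ℝ) : EReal)

theorem IsProxPoint.moreauEnvelope_eq (h : IsProxPoint f r x p) :
    moreauEnvelope f r x = f p + ((r / 2 * ‖p - x‖ ^ 2 : ℝ) : EReal) :=
  le_antisymm (iInf_le _ p) (le_iInf h)

theorem IsProxPoint.ne_top (h : IsProxPoint f r x p) {y : E} (hy : f y ≠ ⊤) : f p ≠ ⊤ :=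
  fun hp => (EReal.add_ne_top_iff_ne_top_left (EReal.coe_ne_bot _) (EReal.coe_ne_top _)).2 hy
    (top_le_iff.1 (by simpa only [hp, EReal.top_add_coe] using h y))

theorem exists_isProxPoint [InnerProductSpace ℝ E] [ProperSpace E]
    (hlsc : LowerSemicontinuous f) {ψ : E →L[ℝ] ℝ} {c : ℝ}
    (hψ : ∀ y, ((ψ y + c : ℝ) : EReal) ≤ f y) {x₀ : E} {a₀ : ℝ} (hx₀ : f x₀ = a₀)
    (hr : 0 < r) (x : E) : ∃ p, IsProxPoint f r x p := by
  set g := fun y => f y + ((r / 2 * ‖y - x‖ ^ 2 : ℝ) : EReal)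
  have hg : LowerSemicontinuous g :=
    hlsc.add' (continuous_coe_real_ereal.comp (by fun_prop)).lowerSemicontinuous
      fun _ => EReal.continuousAt_add (Or.inr (EReal.coe_ne_bot _)) (Or.inr (EReal.coe_ne_top _))
  set M := a₀ + r / 2 * ‖x₀ - x‖ ^ 2
  set K := {y | g y ≤ M}
  have hx₀K : x₀ ∈ K := by simp [K, g, M, hx₀]
  set w := (InnerProductSpace.toDual ℝ E).symm ψ
  have hK : K ⊆ Metric.closedBall (x - r⁻¹ • w)
      (Real.sqrt (2 / r * (M - c - ψ x) + ‖r⁻¹ • w‖ ^ 2)) := by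
    intro y hy
    -- completing the square in `ψ y + r / 2 * ‖y - x‖ ^ 2`, with `ψ = ⟪w, ·⟫`
    have hbound : ψ y + c + r / 2 * ‖y - x‖ ^ 2 ≤ M := by
      have := (add_le_add (hψ y) le_rfl).trans (show g y ≤ M from hy)
      exact_mod_cast this
    have hsq : ‖y - (x - r⁻¹ • w)‖ ^ 2
        = ‖y - x‖ ^ 2 + 2 * (r⁻¹ * (ψ y - ψ x)) + ‖r⁻¹ • w‖ ^ 2 := by
      rw [show y - (x - r⁻¹ • w) = (y - x) + r⁻¹ • w by abel, norm_add_sq_real,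
        real_inner_smul_right, real_inner_comm, InnerProductSpace.toDual_symm_apply, map_sub]
    rw [Metric.mem_closedBall, dist_eq_norm]
    refine Real.le_sqrt_of_sq_le (hsq ▸ ?_)
    have : 0 ≤ 2 / r * (M - (ψ y + c + r / 2 * ‖y - x‖ ^ 2)) :=
      mul_nonneg (by positivity) (sub_nonneg.2 hbound)
    field_simp at this ⊢
    linarith
  have hKc : IsCompact K := Metric.isCompact_of_isClosed_isBounded
    (hg.isClosed_preimage M) (Metric.isBounded_closedBall.subset hK)
  obtain ⟨p, hpK, hp⟩ := (hg.lowerSemicontinuousOn K).exists_isMinOn ⟨x₀, hx₀K⟩ hKc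
  refine ⟨p, fun y => ?_⟩
  by_cases hy : y ∈ K
  · exact hp hy
  · exact hpK.trans (not_le.1 hy).le

end MoreauEnvelope

section EuclideanSpace

variable {n : ℕ} {f : EuclideanSpace ℝ (Fin n) → EReal} {r : ℝ}
  {x y p q v : EuclideanSpace ℝ (Fin n)}

def EssStrictConvex (f : EuclideanSpace ℝ (Fin n) → EReal) : Prop :=
  ∀ s ⊆ {x | ∃ v, ESubdiff f x v}, Convex ℝ s → EStrictConvexOn s f

theorem ESubdiff.ne_top (h : ESubdiff f x v) (hy : f y ≠ ⊤) : f x ≠ ⊤ :=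
  fun hx => hy (by simpa [hx] using h y)

theorem EConvexOn.le_coe (hf : EConvexOn f) {a b θ : ℝ} (hx : f x = a) (hy : f y = b)
    (h₀ : 0 ≤ θ) (h₁ : θ ≤ 1) :
    f (θ • x + (1 - θ) • y) ≤ ((θ * a + (1 - θ) * b : ℝ) : EReal) := by
  have := hf x y θ h₀ h₁
  rw [hx, hy] at this
  exact_mod_cast this

theorem EConvexOn.convex_epigraph (hf : EConvexOn f) :
    Convex ℝ {p : EuclideanSpace ℝ (Fin n) × ℝ | f p.1 ≤ p.2} := by
  rintro ⟨x, a⟩ hx ⟨y, b⟩ hy θ η hθ hη hθη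
  obtain rfl : η = 1 - θ := by linarith
  change f (θ • x + (1 - θ) • y) ≤ ((θ * a + (1 - θ) * b : ℝ) : EReal)
  calc f (θ • x + (1 - θ) • y) ≤ (θ : EReal) * f x + ((1 - θ : ℝ) : EReal) * f y :=
        hf x y θ hθ (by linarith)
    _ ≤ (θ : EReal) * a + ((1 - θ : ℝ) : EReal) * b :=
        add_le_add (mul_le_mul_of_nonneg_left hx (by exact_mod_cast hθ))
          (mul_le_mul_of_nonneg_left hy (by exact_mod_cast hη))
    _ = ((θ * a + (1 - θ) * b : ℝ) : EReal) := by norm_cast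

theorem EConvexOn.convex_setOf_eSubdiff (hf : EConvexOn f) (hnb : ∀ x, f x ≠ ⊥)
    (v : EuclideanSpace ℝ (Fin n)) : Convex ℝ {x | ESubdiff f x v} := by
  intro p hp q hq θ η hθ hη hθη z
  obtain rfl : η = 1 - θ := by linarith
  rcases eq_or_ne (f z) ⊤ with hz | hz
  · simp [hz]
  obtain ⟨ζ, hζ⟩ : ∃ ζ : ℝ, f z = ζ := ⟨_, (EReal.coe_toReal hz (hnb z)).symm⟩
  obtain ⟨a, ha⟩ : ∃ a : ℝ, f p = a := ⟨_, (EReal.coe_toReal (hp.ne_top hz) (hnb p)).symm⟩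
  obtain ⟨b, hb⟩ : ∃ b : ℝ, f q = b := ⟨_, (EReal.coe_toReal (hq.ne_top hz) (hnb q)).symm⟩
  have hpz := hp z
  have hqz := hq z
  rw [ha, hζ, ← EReal.coe_add, EReal.coe_le_coe_iff] at hpz
  rw [hb, hζ, ← EReal.coe_add, EReal.coe_le_coe_iff] at hqz
  have hinner : ⟪v, z - (θ • p + (1 - θ) • q)⟫ = θ * ⟪v, z - p⟫ + (1 - θ) * ⟪v, z - q⟫ := by
    rw [show z - (θ • p + (1 - θ) • q) = θ • (z - p) + (1 - θ) • (z - q) by module,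
      inner_add_right, real_inner_smul_right, real_inner_smul_right]
  calc f (θ • p + (1 - θ) • q) + ((⟪v, z - (θ • p + (1 - θ) • q)⟫ : ℝ) : EReal)
      ≤ ((θ * a + (1 - θ) * b : ℝ) : EReal) + ((⟪v, z - (θ • p + (1 - θ) • q)⟫ : ℝ) : EReal) :=
        add_le_add (hf.le_coe ha hb hθ (by linarith)) le_rfl
    _ ≤ f z := by
        rw [hζ, ← EReal.coe_add, EReal.coe_le_coe_iff, hinner]
        nlinarith [mul_le_mul_of_nonneg_left hpz hθ, mul_le_mul_of_nonneg_left hqz hη]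

theorem EssStrictConvex.lt_of_eSubdiff (hess : EssStrictConvex f) (hf : EConvexOn f)
    (hnb : ∀ x, f x ≠ ⊥) (hp : ESubdiff f p v) (hq : ESubdiff f q v) (hpq : p ≠ q) {θ : ℝ}
    (h₀ : 0 < θ) (h₁ : θ < 1) :
    f (θ • p + (1 - θ) • q) < (θ : EReal) * f p + ((1 - θ : ℝ) : EReal) * f q :=
  hess (segment ℝ p q)
    (((hf.convex_setOf_eSubdiff hnb v).segment_subset hp hq).trans fun _ hz => ⟨v, hz⟩)
    (convex_segment p q) p (left_mem_segment ℝ p q) q (right_mem_segment ℝ p q) hpq θ h₀ h₁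

theorem IsProxPoint.eSubdiff (h : IsProxPoint f r x p) (hf : EConvexOn f)
    (hnb : ∀ x, f x ≠ ⊥) {a : ℝ} (hp : f p = a) : ESubdiff f p (r • (x - p)) := by
  intro y
  rcases eq_or_ne (f y) ⊤ with hy | hy
  · simp [hy]
  obtain ⟨b, hb⟩ : ∃ b : ℝ, f y = b := ⟨_, (EReal.coe_toReal hy (hnb y)).symm⟩
  rw [hp, hb, ← EReal.coe_add, EReal.coe_le_coe_iff, real_inner_smul_left]
  have key : ∀ t ∈ Ioc (0 : ℝ) 1,
      0 ≤ t * (b - a - r * ⟪x - p, y - p⟫) + t ^ 2 * (r / 2 * ‖y - p‖ ^ 2) := by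
    rintro t ⟨ht₀, ht₁⟩
    have hmin : a + r / 2 * ‖p - x‖ ^ 2
        ≤ t * b + (1 - t) * a + r / 2 * ‖t • y + (1 - t) • p - x‖ ^ 2 := by
      have := (h (t • y + (1 - t) • p)).trans (add_le_add (hf.le_coe hb hp ht₀.le ht₁) le_rfl)
      rw [hp] at this
      exact_mod_cast this
    have hnorm : ‖t • y + (1 - t) • p - x‖ ^ 2
        = ‖p - x‖ ^ 2 - 2 * t * ⟪x - p, y - p⟫ + t ^ 2 * ‖y - p‖ ^ 2 := by
      rw [show t • y + (1 - t) • p - x = (p - x) + t • (y - p) by module, norm_add_sq_real,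
        real_inner_smul_right, norm_smul, mul_pow, Real.norm_eq_abs, sq_abs,
        ← neg_sub x p, inner_neg_left]
      ring
    rw [hnorm] at hmin
    linarith
  linarith [nonneg_of_forall_mul_add_sq_mul_nonneg key]

theorem isProxPoint_of_eSubdiff (hr : 0 ≤ r) (h : ESubdiff f p (r • (x - p))) :
    IsProxPoint f r x p := by
  intro y
  have hquad : r / 2 * ‖p - x‖ ^ 2 ≤ ⟪r • (x - p), y - p⟫ + r / 2 * ‖y - x‖ ^ 2 := by
    have hyx : ‖y - x‖ ^ 2 = ‖y - p‖ ^ 2 - 2 * ⟪y - p, x - p⟫ + ‖x - p‖ ^ 2 := by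
      rw [← norm_sub_sq_real, sub_sub_sub_cancel_right]
    rw [hyx, real_inner_smul_left, real_inner_comm, norm_sub_rev p x]
    nlinarith [mul_nonneg hr (sq_nonneg ‖y - p‖)]
  calc f p + ((r / 2 * ‖p - x‖ ^ 2 : ℝ) : EReal)
      ≤ f p + ((⟪r • (x - p), y - p⟫ + r / 2 * ‖y - x‖ ^ 2 : ℝ) : EReal) :=
        add_le_add le_rfl (by exact_mod_cast hquad)
    _ = f p + ((⟪r • (x - p), y - p⟫ : ℝ) : EReal) + ((r / 2 * ‖y - x‖ ^ 2 : ℝ) : EReal) := by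
        rw [EReal.coe_add, add_assoc]
    _ ≤ f y + ((r / 2 * ‖y - x‖ ^ 2 : ℝ) : EReal) := add_le_add (h y) le_rfl

theorem exists_isProxPoint_of_eConvexOn (hlsc : LowerSemicontinuous f) (hf : EConvexOn f)
    (hnb : ∀ x, f x ≠ ⊥) (hproper : ∃ x, f x ≠ ⊤) (hr : 0 < r) (x : EuclideanSpace ℝ (Fin n)) :
    ∃ p, ∃ a : ℝ, IsProxPoint f r x p ∧ f p = a := by
  obtain ⟨x₀, hx₀⟩ := hproper
  obtain ⟨a₀, ha₀⟩ : ∃ a : ℝ, f x₀ = a := ⟨_, (EReal.coe_toReal hx₀ (hnb x₀)).symm⟩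
  obtain ⟨ψ, c, hψ⟩ := exists_affine_le_of_convex_epigraph hlsc hf.convex_epigraph ha₀
  obtain ⟨p, hp⟩ := exists_isProxPoint hlsc hψ ha₀ hr x
  exact ⟨p, _, hp, (EReal.coe_toReal (hp.ne_top hx₀) (hnb p)).symm⟩

theorem EssStrictConvex.eStrictConvexOn_moreauEnvelope (hess : EssStrictConvex f)
    (hlsc : LowerSemicontinuous f) (hf : EConvexOn f) (hnb : ∀ x, f x ≠ ⊥)
    (hproper : ∃ x, f x ≠ ⊤) (hr : 0 < r) : EStrictConvexOn univ (moreauEnvelope f r) := by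
  intro x _ y _ hxy θ h₀ h₁
  obtain ⟨p, a, hp, ha⟩ := exists_isProxPoint_of_eConvexOn hlsc hf hnb hproper hr x
  obtain ⟨q, b, hq, hb⟩ := exists_isProxPoint_of_eConvexOn hlsc hf hnb hproper hr y
  rw [hp.moreauEnvelope_eq, hq.moreauEnvelope_eq, ha, hb]
  set pm := θ • p + (1 - θ) • q
  have hdisp : pm - (θ • x + (1 - θ) • y) = θ • (p - x) + (1 - θ) • (q - y) := by module
  calc moreauEnvelope f r (θ • x + (1 - θ) • y)
      ≤ f pm + ((r / 2 * ‖pm - (θ • x + (1 - θ) • y)‖ ^ 2 : ℝ) : EReal) := iInf_le _ pm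
    _ < ((θ * (a + r / 2 * ‖p - x‖ ^ 2) + (1 - θ) * (b + r / 2 * ‖q - y‖ ^ 2) : ℝ) : EReal) := ?_
    _ = (θ : EReal) * (a + ((r / 2 * ‖p - x‖ ^ 2 : ℝ) : EReal))
        + ((1 - θ : ℝ) : EReal) * (b + ((r / 2 * ‖q - y‖ ^ 2 : ℝ) : EReal)) := by norm_cast
  rw [hdisp]
  rcases eq_or_ne (p - x) (q - y) with hd | hd
  · have hvq : ESubdiff f q (r • (x - p)) := by
      rw [show x - p = y - q by rw [← neg_sub, hd, neg_sub]]
      exact hq.eSubdiff hf hnb hb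
    have hpq : p ≠ q := fun h => hxy (sub_right_inj.1 (h ▸ hd))
    have hlt := hess.lt_of_eSubdiff hf hnb (hp.eSubdiff hf hnb ha) hvq hpq h₀ h₁
    rw [ha, hb] at hlt
    rw [← hd, ← add_smul, add_sub_cancel, one_smul]
    calc f pm + ((r / 2 * ‖p - x‖ ^ 2 : ℝ) : EReal)
        < ((θ : EReal) * a + ((1 - θ : ℝ) : EReal) * b) + ((r / 2 * ‖p - x‖ ^ 2 : ℝ) : EReal) :=
          EReal.add_lt_add_right_coe hlt _
      _ = _ := by norm_cast; ring
  · calc f pm + ((r / 2 * ‖θ • (p - x) + (1 - θ) • (q - y)‖ ^ 2 : ℝ) : EReal)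
        ≤ ((θ * a + (1 - θ) * b : ℝ) : EReal)
          + ((r / 2 * ‖θ • (p - x) + (1 - θ) • (q - y)‖ ^ 2 : ℝ) : EReal) :=
          add_le_add (hf.le_coe ha hb h₀.le h₁.le) le_rfl
      _ < _ := by
          rw [← EReal.coe_add, EReal.coe_lt_coe_iff]
          nlinarith [norm_smul_add_one_sub_smul_sq_lt hd h₀ h₁]

theorem EStrictConvexOn.essStrictConvex_of_moreauEnvelope
    (h : EStrictConvexOn univ (moreauEnvelope f r)) (hr : 0 < r) (hproper : ∃ x, f x ≠ ⊤)
    (hnb : ∀ x, f x ≠ ⊥) : EssStrictConvex f := by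
  obtain ⟨x₀, hx₀⟩ := hproper
  intro s hs hsc x hx y hy hxy θ h₀ h₁
  have hreal : ∀ z ∈ s, ∃ a : ℝ, f z = a := fun z hz =>
    let ⟨_, hw⟩ := hs hz
    ⟨_, (EReal.coe_toReal (hw.ne_top hx₀) (hnb z)).symm⟩
  set m := θ • x + (1 - θ) • y
  have hms : m ∈ s := hsc hx hy h₀.le (sub_nonneg.2 h₁.le) (add_sub_cancel θ 1)
  obtain ⟨v, hv⟩ := hs hms
  obtain ⟨a, ha⟩ := hreal x hx
  obtain ⟨b, hb⟩ := hreal y hy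
  obtain ⟨μ, hμ⟩ := hreal m hms
  set d := r⁻¹ • v
  set k := r / 2 * ‖d‖ ^ 2
  have hle : ∀ z, moreauEnvelope f r (z + d) ≤ f z + (k : EReal) := fun z =>
    (iInf_le _ z).trans_eq (by simp [k])
  have hm : moreauEnvelope f r (m + d) = f m + (k : EReal) := by
    have hvm : ESubdiff f m (r • (m + d - m)) := by
      simpa [d, smul_smul, hr.ne'] using hv
    rw [(isProxPoint_of_eSubdiff hr.le hvm).moreauEnvelope_eq]
    simp [k]
  have key := h (x + d) trivial (y + d) trivial (by simpa using hxy) θ h₀ h₁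
  rw [show θ • (x + d) + (1 - θ) • (y + d) = m + d by module, hm] at key
  have := key.trans_le (add_le_add
    (mul_le_mul_of_nonneg_left (hle x) (by exact_mod_cast h₀.le))
    (mul_le_mul_of_nonneg_left (hle y) (by exact_mod_cast (sub_nonneg.2 h₁.le))))
  rw [ha, hb, hμ] at this ⊢
  norm_cast at this ⊢
  linarith

end EuclideanSpace

/-- `f` is essentially strictly convex iff its Moreau envelope is strictly convex. -/
theorem essStrictConvex_iff_moreau_strictConvex {n : ℕ}
    (f : EuclideanSpace ℝ (Fin n) → EReal) (hlsc : LowerSemicontinuous f)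
    (hproper : ∃ x, f x ≠ ⊤) (hnb : ∀ x, f x ≠ ⊥) (hconv : EConvexOn f)
    (r : ℝ) (hr : 0 < r) :
    (∀ s : Set (EuclideanSpace ℝ (Fin n)),
        s ⊆ {x | ∃ v, ESubdiff f x v} → Convex ℝ s → EStrictConvexOn s f) ↔
      EStrictConvexOn Set.univ
        (fun x => ⨅ y, f y + (((r / 2) * ‖y - x‖ ^ 2 : ℝ) : EReal)) :=
  ⟨fun hess => EssStrictConvex.eStrictConvexOn_moreauEnvelope hess hlsc hconv hnb hproper hr,
    fun h => EStrictConvexOn.essStrictConvex_of_moreauEnvelope h hr hproper hnb⟩
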